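/- Let p₁ = (1+ε)/√n and p₂ = 1/√n with ε ∈ (0,1) and n ≥ 4. Then the squared Hellinger distance between the distributions D(p₁) and D(p₂) satisfies H²(D(p₁), D(p₂)) = n·(√((1−p₁)/n) − √((1−p₂)/n))² + (√p₁ − √p₂)² ≤ C·ε²/√n for an absolute constant C. -/

import Mathlib

/-- The distribution `D(p)` on `{0, v₁, …, vₙ}` (encoded as `Option (Fin n)`):
probability `p` on the origin (`none`) and `(1-p)/n` on each `vᵢ` (`some i`). -/
noncomputable def Dp (n : ℕ) (p : ℝ) : Option (Fin n) → ℝ :=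
  fun x => match x with
    | none => p
    | some _ => (1 - p) / n

/-!
Both coordinates of the Hellinger sum are controlled by
`(√a - √b)² = (a - b)² / (√a + √b)² ≤ (a - b)² / a`, which gives the chi-square type bound
`H²(D(p), D(q)) ≤ (p - q)² (1/p + 1/(1 - q))`. With `p - q = ε/√n`, `p ≥ 1/√n` and `1 - q ≥ 1/2`
this is at most `ε²/n · (√n + 2) ≤ 2ε²/√n` once `n ≥ 4`.
-/

open Real

lemma sq_sqrt_sub_sqrt_le {a b : ℝ} (ha : 0 < a) (hb : 0 ≤ b) :
    (√a - √b) ^ 2 ≤ (a - b) ^ 2 / a := by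
  rw [le_div_iff₀ ha]
  calc (√a - √b) ^ 2 * a = (√a - √b) ^ 2 * √a ^ 2 := by rw [sq_sqrt ha.le]
    _ ≤ (√a - √b) ^ 2 * (√a + √b) ^ 2 := by
        gcongr
        exact le_add_of_nonneg_right (sqrt_nonneg b)
    _ = (a - b) ^ 2 := by
        rw [← mul_pow, show (√a - √b) * (√a + √b) = √a ^ 2 - √b ^ 2 by ring,
          sq_sqrt ha.le, sq_sqrt hb]

lemma mul_sq_sqrt_div_sub_sqrt_div {c : ℝ} (hc : 0 < c) (x y : ℝ) :
    c * (√(x / c) - √(y / c)) ^ 2 = (√x - √y) ^ 2 := by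
  rw [sqrt_div' x hc.le, sqrt_div' y hc.le, ← sub_div, div_pow, sq_sqrt hc.le]
  field_simp

lemma sum_sq_sqrt_Dp_sub_sqrt_Dp (n : ℕ) (p q : ℝ) :
    ∑ x : Option (Fin n), (√(Dp n p x) - √(Dp n q x)) ^ 2
      = n * (√((1 - p) / n) - √((1 - q) / n)) ^ 2 + (√p - √q) ^ 2 := by
  simp only [Fintype.sum_option, Dp, Finset.sum_const, Finset.card_univ, Fintype.card_fin,
    nsmul_eq_mul]
  ring

lemma sum_sq_sqrt_Dp_sub_sqrt_Dp_le {n : ℕ} (hn : 0 < n) {p q : ℝ} (hp : 0 < p) (hp1 : p ≤ 1)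
    (hq : 0 ≤ q) (hq1 : q < 1) :
    ∑ x : Option (Fin n), (√(Dp n p x) - √(Dp n q x)) ^ 2
      ≤ (p - q) ^ 2 * (1 / p + 1 / (1 - q)) := by
  rw [sum_sq_sqrt_Dp_sub_sqrt_Dp, mul_sq_sqrt_div_sub_sqrt_div (by positivity),
    sub_sq_comm (√(1 - p))]
  have h₁ := sq_sqrt_sub_sqrt_le (sub_pos.2 hq1) (sub_nonneg.2 hp1)
  have h₂ := sq_sqrt_sub_sqrt_le hp hq
  rw [show 1 - q - (1 - p) = p - q by ring] at h₁
  calc _ ≤ (p - q) ^ 2 / (1 - q) + (p - q) ^ 2 / p := add_le_add h₁ h₂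
    _ = _ := by ring

theorem stmt13 : ∃ C : ℝ, 0 < C ∧
    ∀ n : ℕ, 4 ≤ n → ∀ ε : ℝ, 0 < ε → ε < 1 →
    ∀ p₁ p₂ : ℝ, p₁ = (1 + ε) / Real.sqrt n → p₂ = 1 / Real.sqrt n →
    (∑ x : Option (Fin n), (Real.sqrt (Dp n p₁ x) - Real.sqrt (Dp n p₂ x)) ^ 2)
      = n * (Real.sqrt ((1 - p₁) / n) - Real.sqrt ((1 - p₂) / n)) ^ 2
        + (Real.sqrt p₁ - Real.sqrt p₂) ^ 2 ∧
    (∑ x : Option (Fin n), (Real.sqrt (Dp n p₁ x) - Real.sqrt (Dp n p₂ x)) ^ 2)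
      ≤ C * ε ^ 2 / Real.sqrt n := by
  refine ⟨2, two_pos, fun n hn ε hε hε1 p₁ p₂ hp₁ hp₂ =>
    ⟨sum_sq_sqrt_Dp_sub_sqrt_Dp n p₁ p₂, ?_⟩⟩
  have hs : 2 ≤ √(n : ℝ) := le_sqrt_of_sq_le (by norm_cast)
  have hsn : √(n : ℝ) ^ 2 = n := sq_sqrt (Nat.cast_nonneg n)
  have hp₁pos : 0 < p₁ := by rw [hp₁]; positivity
  have hp₁le : p₁ ≤ 1 := by rw [hp₁, div_le_one (by positivity)]; linarith
  have hp₂le : p₂ ≤ 1 / 2 := by rw [hp₂]; gcongr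
  refine (sum_sq_sqrt_Dp_sub_sqrt_Dp_le (by omega) hp₁pos hp₁le
    (by rw [hp₂]; positivity) (by linarith)).trans ?_
  have hinv₁ : 1 / p₁ ≤ √n := by
    rw [hp₁, one_div_div, div_le_iff₀ (by linarith)]; nlinarith
  have hinv₂ : 1 / (1 - p₂) ≤ 2 := by
    rw [div_le_iff₀ (by linarith)]; linarith
  have hgap : (p₁ - p₂) ^ 2 = ε ^ 2 / n := by
    rw [hp₁, hp₂, ← sub_div, div_pow, hsn]; ring
  calc (p₁ - p₂) ^ 2 * (1 / p₁ + 1 / (1 - p₂)) ≤ ε ^ 2 / n * (√n + 2) := by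
        rw [hgap]; gcongr
    _ ≤ 2 * ε ^ 2 / √n := by
        rw [div_mul_eq_mul_div, div_le_div_iff₀ (by positivity) (by positivity)]
        nlinarith [mul_nonneg (mul_nonneg (sq_nonneg ε) (sqrt_nonneg (n : ℝ))) (sub_nonneg.2 hs)]
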